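/- For any integer q ≥ 3, any even integer d, and any integer k ≥ 1 with k(q-1)^{k-1} ≤ d, we have χ(T_q, d) ≤ (q-1)^k + (q-1)^{⌊k/2⌋} + d/k + 1. -/

import Mathlib

/-!
Write `d = 2 s` and `t = ⌊d / k⌋`. Root the tree at `r`, fix a neighbour `c₀` of `r`, and label
the children of every vertex injectively by `Fin (q - 1)`, leaving `c₀` out at the root. A vertex
`v` at level `ℓ` then carries the sequence of labels of its ancestors, shifted by `s` levels, and
lies in block `⌊ℓ / k⌋`. Two vertices at distance `2 s` whose root paths part at level `g` have
levels summing to `2 (g + s)`, and their sequences agree before position `g + s`; if they are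
in the same block they differ at that position, which lies in the block's window of `k` labels.

So a vertex of block `m` gets a colour which is an injective function of its window and avoids
the colours of blocks `m - t - 1, …, m - 2` of its own sequence and of block `m - 1` of every
sequence agreeing with its own up to the middle of that block's window: that is at most
`(q - 1) ^ k + (q - 1) ^ ⌊k / 2⌋ + t` colours. The vertices at distance less than `s` from `r` or
from `c₀` are pairwise closer than `2 s`, and share one further colour.
-/

/-- The exact `d`-th power of a graph `G`: same vertices, adjacency iff the
distance in `G` is exactly `d`. -/
def exactDistGraph {V : Type*} (G : SimpleGraph V) (d : ℕ) : SimpleGraph V where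
  Adj u v := u ≠ v ∧ G.dist u v = d
  symm := by
    constructor
    intro u v h
    exact ⟨h.1.symm, by rw [SimpleGraph.dist_comm]; exact h.2⟩
  loopless := by
    constructor
    intro u h
    exact h.1 rfl

open Function Set

theorem ncard_le_of_subset_range {ι α : Type*} [Finite ι] {s : Set α} {f : ι → α}
    (h : s ⊆ range f) : s.ncard ≤ Nat.card ι :=
  (ncard_le_ncard h).trans ((Nat.card_coe_set_eq _).symm.le.trans (Finite.card_range_le f))

theorem exists_injective_forall_notMem {W C : Type*} [Finite W] [Finite C] [Nonempty C]
    {F : Set C} (h : F.ncard + Nat.card W ≤ Nat.card C) :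
    ∃ e : W → C, Injective e ∧ ∀ w, e w ∉ F := by
  have hle : (univ : Set W).encard ≤ Fᶜ.encard := by
    rw [← (toFinite _).cast_ncard_eq, ← (toFinite _).cast_ncard_eq, ncard_univ, ncard_compl]
    exact_mod_cast (by omega)
  obtain ⟨e, he, hinj⟩ := (toFinite _).exists_injOn_of_encard_le hle
  exact ⟨e, injOn_univ.mp hinj, fun w => he (mem_univ w)⟩

theorem exists_injOn_fibers {α β : Type*} {n : ℕ} [NeZero n] (f : α → β) (S : Set α)
    (h : ∀ b, (S ∩ f ⁻¹' {b}).encard ≤ n) :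
    ∃ c : α → Fin n, ∀ x ∈ S, ∀ y ∈ S, f x = f y → c x = c y → x = y := by
  have : ∀ b, ∃ e : α → Fin n, InjOn e (S ∩ f ⁻¹' {b}) := fun b => by
    obtain ⟨e, -, he⟩ := (finite_of_encard_le_coe (h b)).exists_injOn_of_encard_le
      (t := (univ : Set (Fin n))) (by simpa using h b)
    exact ⟨e, he⟩
  choose e he using this
  refine ⟨fun x => e (f x) x, fun x hx y hy hxy hc => he (f x) ⟨hx, rfl⟩ ⟨hy, hxy.symm⟩ ?_⟩
  simpa only [hxy] using hc

section InjAvoiding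

variable {W C : Type*} [Nonempty C]

noncomputable def injAvoiding (F : Set C) : W → C :=
  Classical.epsilon fun e : W → C => Injective e ∧ ∀ w, e w ∉ F

theorem injAvoiding_spec {F : Set C} (h : ∃ e : W → C, Injective e ∧ ∀ w, e w ∉ F) :
    Injective (injAvoiding (W := W) F) ∧ ∀ w, injAvoiding (W := W) F w ∉ F :=
  Classical.epsilon_spec h

end InjAvoiding

section BlockColoring

variable {A C : Type*} (k t : ℕ)

def blockWindow (m : ℕ) (α : ℕ → A) : Fin k → A := fun i => α (k * m + i)

def forbiddenColors (col : ℕ → (ℕ → A) → C) (m : ℕ) (α : ℕ → A) : Set C :=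
  {c | ∃ j, j + 2 ≤ m ∧ m ≤ j + t + 1 ∧ col j α = c} ∪
    {c | ∃ β : ℕ → A, 0 < m ∧ (∀ p < k * (m - 1) + (k + 1) / 2, β p = α p) ∧ col (m - 1) β = c}

noncomputable def blockColor [Nonempty C] (m : ℕ) (α : ℕ → A) : C :=
  injAvoiding
    (forbiddenColors k t (fun j β => if j < m then blockColor j β else Classical.arbitrary C) m α)
    (blockWindow k m α)
termination_by m

variable {k t}

theorem forbiddenColors_congr_col {col col' : ℕ → (ℕ → A) → C} {m : ℕ}
    (h : ∀ j < m, col j = col' j) (α : ℕ → A) :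
    forbiddenColors k t col m α = forbiddenColors k t col' m α := by
  simp only [forbiddenColors]
  congr 1 <;> ext c <;> simp only [mem_ofPred_eq]
  · exact exists_congr fun j => and_congr_right fun hj => by rw [h j (by omega)]
  · exact exists_congr fun β => and_congr_right fun hm => by rw [h (m - 1) (by omega)]

theorem forbiddenColors_congr_seq {col : ℕ → (ℕ → A) → C} {m : ℕ}
    (hcol : ∀ j < m, ∀ α β : ℕ → A, (∀ p < k * j + k, α p = β p) → col j α = col j β)
    {α β : ℕ → A} (h : ∀ p < k * m, α p = β p) :
    forbiddenColors k t col m α = forbiddenColors k t col m β := by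
  simp only [forbiddenColors]
  congr 1 <;> ext c <;> simp only [mem_ofPred_eq]
  · refine exists_congr fun j => and_congr_right fun hj => ?_
    have : k * (j + 1) ≤ k * m := Nat.mul_le_mul_left k (by omega)
    rw [hcol j (by omega) α β fun p hp => h p (by rw [mul_add, mul_one] at this; omega)]
  · refine exists_congr fun γ => and_congr_right fun hm => and_congr_left fun _ => ?_
    have : k * (m - 1) + k = k * m := by
      rw [← mul_add_one, Nat.sub_add_cancel (Nat.one_le_of_lt hm)]
    exact forall₂_congr fun p hp => by rw [h p (by omega)]

variable [Nonempty C]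

theorem blockColor_eq_injAvoiding (m : ℕ) (α : ℕ → A) :
    (blockColor k t m α : C) =
      injAvoiding (forbiddenColors k t (blockColor k t) m α) (blockWindow k m α) := by
  rw [blockColor, forbiddenColors_congr_col (col' := blockColor k t)]
  intro j hj
  funext β
  rw [if_pos hj]

theorem blockColor_congr {m : ℕ} {α β : ℕ → A} (h : ∀ p < k * m + k, α p = β p) :
    blockColor k t m α = (blockColor k t m β : C) := by
  induction m using Nat.strong_induction_on generalizing α β with
  | _ m ih =>
    rw [blockColor_eq_injAvoiding, blockColor_eq_injAvoiding,
      forbiddenColors_congr_seq (fun j hj _ _ => ih j hj) fun p hp => h p (by omega)]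
    congr 1
    funext i
    exact h _ (by simp only [Fin.is_lt, add_lt_add_iff_left])

theorem ncard_forbiddenColors_le [Finite A] (m : ℕ) (α : ℕ → A) :
    (forbiddenColors k t (blockColor k t) m α : Set C).ncard ≤ t + Nat.card A ^ (k / 2) := by
  rw [forbiddenColors]
  set L := k * (m - 1) + (k + 1) / 2
  refine (ncard_union_le _ _).trans (add_le_add ?_ ?_)
  · refine (ncard_le_of_subset_range (f := fun i : Fin t => blockColor k t (m - 2 - i) α) ?_).trans
      (by simp)
    rintro c ⟨j, hj, hjt, rfl⟩
    exact ⟨⟨m - 2 - j, by omega⟩, by dsimp only; rw [show m - 2 - (m - 2 - j) = j by omega]⟩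
  -- a colour of block `m - 1` only depends on the `k / 2` terms between `L` and `k * m`
  · refine (ncard_le_of_subset_range (f := fun f : Fin (k / 2) → A => blockColor k t (m - 1)
      fun p => if h : L ≤ p ∧ p - L < k / 2 then f ⟨p - L, h.2⟩ else α p) ?_).trans
      (by rw [Nat.card_fun, Nat.card_fin])
    rintro c ⟨β, -, hβ, rfl⟩
    refine ⟨fun i => β (L + i), blockColor_congr fun p hp => ?_⟩
    dsimp only
    split_ifs with h
    · rw [Nat.add_sub_cancel' h.1]
    · exact (hβ p (by omega)).symm

variable [Finite A] [Finite C] (hC : Nat.card A ^ k + Nat.card A ^ (k / 2) + t ≤ Nat.card C)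
include hC

theorem injAvoiding_forbiddenColors_spec (m : ℕ) (α : ℕ → A) :
    Injective (injAvoiding (W := Fin k → A) (forbiddenColors k t (blockColor k t) m α : Set C)) ∧
      ∀ w : Fin k → A, injAvoiding (forbiddenColors k t (blockColor k t) m α) w ∉
        (forbiddenColors k t (blockColor k t) m α : Set C) := by
  refine injAvoiding_spec (exists_injective_forall_notMem ?_)
  have := ncard_forbiddenColors_le (C := C) (k := k) (t := t) m α
  rw [Nat.card_fun, Nat.card_fin]
  omega

theorem blockColor_notMem_forbiddenColors (m : ℕ) (α : ℕ → A) :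
    blockColor k t m α ∉ (forbiddenColors k t (blockColor k t) m α : Set C) := by
  rw [blockColor_eq_injAvoiding]
  exact (injAvoiding_forbiddenColors_spec hC m α).2 _

theorem blockColor_ne_of_far {j m : ℕ} (hj : j + 2 ≤ m) (hm : m ≤ j + t + 1) (α : ℕ → A) :
    (blockColor k t j α : C) ≠ blockColor k t m α := fun h =>
  blockColor_notMem_forbiddenColors hC m α (Or.inl ⟨j, hj, hm, h⟩)

theorem blockColor_ne_succ {m : ℕ} {α β : ℕ → A} (h : ∀ p < k * m + (k + 1) / 2, α p = β p) :
    (blockColor k t m α : C) ≠ blockColor k t (m + 1) β := fun hc =>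
  blockColor_notMem_forbiddenColors hC (m + 1) β (Or.inr ⟨α, m.succ_pos, h, hc⟩)

theorem blockColor_ne_of_blockWindow_ne {m : ℕ} {α β : ℕ → A} (h : ∀ p < k * m, α p = β p)
    (hw : blockWindow k m α ≠ blockWindow k m β) :
    (blockColor k t m α : C) ≠ blockColor k t m β := by
  rw [blockColor_eq_injAvoiding, blockColor_eq_injAvoiding,
    forbiddenColors_congr_seq (fun _ _ _ _ => blockColor_congr) h]
  exact (injAvoiding_forbiddenColors_spec hC m β).1.ne hw

theorem blockColor_ne (hk : 0 < k) {a b L : ℕ} {α β : ℕ → A} (hab : a ≤ b) (hL : a + b = 2 * L)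
    (hba : b < a + k * (t + 1)) (hαβ : ∀ p < L, α p = β p)
    (hblock : a / k = b / k → α L ≠ β L) :
    (blockColor k t (a / k) α : C) ≠ blockColor k t (b / k) β := by
  have hmn : a / k ≤ b / k := Nat.div_le_div_right hab
  have ha := Nat.div_add_mod a k
  have hb := Nat.div_add_mod b k
  have hak := Nat.mod_lt a hk
  have hbk := Nat.mod_lt b hk
  generalize a / k = m, b / k = n at *
  obtain rfl | rfl | hmn : m = n ∨ n = m + 1 ∨ m + 2 ≤ n := by omega
  · refine blockColor_ne_of_blockWindow_ne hC (fun p hp => hαβ p (by omega)) fun hw => ?_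
    apply hblock rfl
    have := congrFun hw ⟨L - k * m, by omega⟩
    simpa only [blockWindow, Nat.add_sub_cancel' (show k * m ≤ L by omega)] using this
  · have : k * (m + 1) = k * m + k := by ring
    exact blockColor_ne_succ hC fun p hp => hαβ p (by omega)
  · have h2 : k * m + k * 2 ≤ k * n := by rw [← mul_add]; exact Nat.mul_le_mul_left k hmn
    rw [blockColor_congr fun p hp => hαβ p (by omega)]
    refine blockColor_ne_of_far hC hmn ?_ β
    have e : k * (m + t + 2) = k * m + k * (t + 1) + k := by ring
    have : n < m + t + 2 := Nat.lt_of_mul_lt_mul_left (a := k) (by omega)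
    omega

end BlockColoring

namespace SimpleGraph

variable {V : Type*} {G : SimpleGraph V} {r x y : V}

open scoped Classical in
/-- A neighbour of `x` one step closer to `r`; `x` itself if there is none, which in a connected
graph happens only for `x = r`. -/
noncomputable def parent (G : SimpleGraph V) (r x : V) : V :=
  if h : ∃ y, G.Adj x y ∧ G.dist r y + 1 = G.dist r x then h.choose else x

theorem parent_self (G : SimpleGraph V) (r : V) : G.parent r r = r := by
  rw [parent, dif_neg]
  simp

theorem Connected.exists_adj_dist_add_one (hG : G.Connected) (hx : x ≠ r) :
    ∃ y, G.Adj x y ∧ G.dist r y + 1 = G.dist r x := by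
  obtain ⟨w, hw⟩ := hG.exists_walk_length_eq_dist x r
  cases w with
  | nil => exact absurd rfl hx
  | @cons _ y _ h w =>
    refine ⟨y, h, ?_⟩
    have h1 : G.dist r y ≤ w.length := dist_comm (G := G) ▸ dist_le w
    have h2 : G.dist r x ≤ G.dist r y + 1 := by
      simpa [dist_eq_one_iff_adj.mpr h.symm] using hG.dist_triangle (u := r) (v := y) (w := x)
    have h3 : w.length + 1 = G.dist r x := by rw [dist_comm]; simpa using hw
    omega

theorem Connected.parent_spec (hG : G.Connected) (hx : x ≠ r) :
    G.Adj x (G.parent r x) ∧ G.dist r (G.parent r x) + 1 = G.dist r x := by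
  have h := hG.exists_adj_dist_add_one hx
  rw [parent, dif_pos h]
  exact h.choose_spec

theorem Connected.dist_parent (hG : G.Connected) (x : V) :
    G.dist r (G.parent r x) = G.dist r x - 1 := by
  obtain rfl | hx := eq_or_ne x r
  · simp [parent_self]
  · have := (hG.parent_spec hx).2
    omega

theorem IsTree.parent_eq_of_adj (hG : G.IsTree) (h : G.Adj x y)
    (hd : G.dist r y + 1 = G.dist r x) : G.parent r x = y := by
  classical
  obtain ⟨p, hp, -⟩ := hG.connected.exists_path_of_dist r x
  -- in a tree, a neighbour of `x` closer to `r` lies on every path from `r` to `x`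
  have key : ∀ z, G.Adj x z → G.dist r z + 1 = G.dist r x → z = p.penultimate := by
    intro z hz hdz
    obtain ⟨q, hq, hql⟩ := hG.connected.exists_path_of_dist r z
    have hxq : x ∉ q.support := fun hx => by
      have := (dist_le (q.takeUntil x hx)).trans (q.length_takeUntil_le_length hx)
      omega
    exact hG.isAcyclic.eq_penultimate_of_adj_end hp hz
      (hG.isAcyclic.mem_support_of_ne_mem_support_of_adj_of_isPath hp hq hz hxq)
  have hx : x ≠ r := by rintro rfl; simp at hd
  exact (key _ (hG.connected.parent_spec hx).1 (hG.connected.parent_spec hx).2).trans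
    (key y h hd).symm

theorem IsTree.parent_eq_or_parent_eq (hG : G.IsTree) (r : V) (h : G.Adj x y) :
    (G.parent r y = x ∧ G.dist r x + 1 = G.dist r y) ∨
      (G.parent r x = y ∧ G.dist r y + 1 = G.dist r x) := by
  rcases hG.dist_eq_dist_add_one_of_adj r h with hd | hd
  · exact .inr ⟨hG.parent_eq_of_adj h hd.symm, hd.symm⟩
  · exact .inl ⟨hG.parent_eq_of_adj h.symm hd.symm, hd.symm⟩

/-- The ancestor of `x` at level `j`, or `x` itself if `j ≥ G.dist r x`. -/
noncomputable def ancestor (G : SimpleGraph V) (r x : V) (j : ℕ) : V :=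
  (G.parent r)^[G.dist r x - j] x

theorem Connected.dist_parent_iterate (hG : G.Connected) (n : ℕ) (x : V) :
    G.dist r ((G.parent r)^[n] x) = G.dist r x - n := by
  induction n with
  | zero => rfl
  | succ n ih => rw [iterate_succ_apply', hG.dist_parent, ih, Nat.sub_sub]

theorem Connected.dist_ancestor (hG : G.Connected) (x : V) (j : ℕ) :
    G.dist r (G.ancestor r x j) = min j (G.dist r x) := by
  rw [ancestor, hG.dist_parent_iterate]
  omega

theorem ancestor_of_le {j : ℕ} (h : G.dist r x ≤ j) : G.ancestor r x j = x := by
  rw [ancestor, Nat.sub_eq_zero_of_le h, iterate_zero_apply]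

theorem Connected.ancestor_zero (hG : G.Connected) (x : V) : G.ancestor r x 0 = r := by
  have := hG.dist_ancestor (r := r) x 0
  exact (hG.dist_eq_zero_iff.mp (by omega)).symm

theorem Connected.ancestor_ancestor (hG : G.Connected) {i j : ℕ} (h : i ≤ j) :
    G.ancestor r (G.ancestor r x j) i = G.ancestor r x i := by
  rw [ancestor, hG.dist_ancestor, ancestor, ancestor, ← iterate_add_apply]
  congr 1
  omega

theorem parent_ancestor_succ {j : ℕ} (h : j < G.dist r x) :
    G.parent r (G.ancestor r x (j + 1)) = G.ancestor r x j := by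
  rw [ancestor, ancestor, ← iterate_succ_apply' (G.parent r)]
  congr 1
  omega

theorem Connected.ancestor_eq_of_parent_eq (hG : G.Connected) (hp : G.parent r y = x)
    (hd : G.dist r x + 1 = G.dist r y) {j : ℕ} (hj : j ≤ G.dist r x) :
    G.ancestor r y j = G.ancestor r x j := by
  have : G.ancestor r y (G.dist r x) = x := by
    rw [ancestor, ← hd, Nat.add_sub_cancel_left, iterate_one, hp]
  rw [← hG.ancestor_ancestor hj, this]

theorem Connected.dist_parent_le_one (hG : G.Connected) (x : V) :
    G.dist (G.parent r x) x ≤ 1 := by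
  obtain rfl | hx := eq_or_ne x r
  · simp [parent_self]
  · exact (dist_comm.trans (dist_eq_one_iff_adj.mpr (hG.parent_spec hx).1)).le

theorem Connected.dist_parent_iterate_le (hG : G.Connected) (n : ℕ) (x : V) :
    G.dist ((G.parent r)^[n] x) x ≤ n := by
  induction n with
  | zero => simp
  | succ n ih =>
    rw [iterate_succ_apply']
    set z := (G.parent r)^[n] x
    have := hG.dist_triangle (u := G.parent r z) (v := z) (w := x)
    have := hG.dist_parent_le_one (r := r) z
    omega

theorem Connected.dist_ancestor_le (hG : G.Connected) (x : V) (j : ℕ) :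
    G.dist (G.ancestor r x j) x ≤ G.dist r x - j :=
  hG.dist_parent_iterate_le _ x

theorem IsTree.parent_mem_support (hG : G.IsTree) (hy : y ≠ r) {a b : V} (W : G.Walk a b)
    (ha : G.ancestor r a (G.dist r y) = y) (hb : G.ancestor r b (G.dist r y) ≠ y) :
    G.parent r y ∈ W.support := by
  classical
  induction W with
  | nil => exact absurd ha hb
  | @cons a c b h W ih =>
    rw [Walk.support_cons]
    by_cases hc : G.ancestor r c (G.dist r y) = y
    · exact List.mem_cons_of_mem _ (ih hc hb)
    have hya : G.dist r y ≤ G.dist r a := by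
      have := hG.connected.dist_ancestor (r := r) a (G.dist r y)
      rw [ha] at this
      omega
    rcases hG.parent_eq_or_parent_eq r h with ⟨hp, hd⟩ | ⟨hp, hd⟩
    · exact absurd ((hG.connected.ancestor_eq_of_parent_eq hp hd hya).trans ha) hc
    · by_cases hyc : G.dist r y ≤ G.dist r c
      · exact absurd ((hG.connected.ancestor_eq_of_parent_eq hp hd hyc).symm.trans ha) hc
      · rw [ancestor_of_le (by omega)] at ha
        subst ha
        rw [hp]
        exact List.mem_cons_of_mem _ W.start_mem_support

open scoped Classical in
noncomputable def meetLevel (G : SimpleGraph V) (r u v : V) : ℕ :=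
  Nat.findGreatest (fun j => G.ancestor r u j = G.ancestor r v j) (min (G.dist r u) (G.dist r v))

variable {u v : V}

theorem meetLevel_le : G.meetLevel r u v ≤ min (G.dist r u) (G.dist r v) := by
  classical
  exact Nat.findGreatest_le _

theorem Connected.ancestor_meetLevel (hG : G.Connected) :
    G.ancestor r u (G.meetLevel r u v) = G.ancestor r v (G.meetLevel r u v) := by
  classical
  exact Nat.findGreatest_spec (P := fun j => G.ancestor r u j = G.ancestor r v j) (Nat.zero_le _)
    (by rw [hG.ancestor_zero, hG.ancestor_zero])

theorem Connected.ancestor_eq_of_le_meetLevel (hG : G.Connected) {j : ℕ}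
    (hj : j ≤ G.meetLevel r u v) : G.ancestor r u j = G.ancestor r v j := by
  rw [← hG.ancestor_ancestor hj, hG.ancestor_meetLevel, hG.ancestor_ancestor hj]

theorem ancestor_succ_meetLevel_ne (hu : G.meetLevel r u v < G.dist r u)
    (hv : G.meetLevel r u v < G.dist r v) :
    G.ancestor r u (G.meetLevel r u v + 1) ≠ G.ancestor r v (G.meetLevel r u v + 1) := by
  classical
  unfold meetLevel at hu hv ⊢
  exact Nat.findGreatest_is_greatest (P := fun j => G.ancestor r u j = G.ancestor r v j)
    (lt_add_one _) (by omega)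

theorem IsTree.ancestor_meetLevel_mem_support (hG : G.IsTree) (W : G.Walk u v) :
    G.ancestor r u (G.meetLevel r u v) ∈ W.support := by
  set g := G.meetLevel r u v
  have hg : g ≤ min (G.dist r u) (G.dist r v) := meetLevel_le
  obtain hgu | hgu := eq_or_lt_of_le (hg.trans (min_le_left _ _))
  · rw [hgu, ancestor_of_le le_rfl]
    exact W.start_mem_support
  have hy : G.dist r (G.ancestor r u (g + 1)) = g + 1 := by
    rw [hG.connected.dist_ancestor]
    omega
  rw [← parent_ancestor_succ hgu]
  refine hG.parent_mem_support (fun h => by rw [h, dist_self] at hy; omega) W (by rw [hy])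
    fun hv => ?_
  rw [hy] at hv
  obtain hgv | hgv := lt_or_ge g (G.dist r v)
  · exact ancestor_succ_meetLevel_ne hgu hgv hv.symm
  · rw [ancestor_of_le (by omega)] at hv
    rw [hv, hy] at hgv
    omega

theorem IsTree.dist_add_two_mul_meetLevel (hG : G.IsTree) (r u v : V) :
    G.dist u v + 2 * G.meetLevel r u v = G.dist r u + G.dist r v := by
  classical
  set g := G.meetLevel r u v
  set w := G.ancestor r u g
  have hg : g ≤ min (G.dist r u) (G.dist r v) := meetLevel_le
  have hw : G.dist r w = g := by
    rw [hG.connected.dist_ancestor]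
    omega
  have hwu : G.dist w u + g = G.dist r u := by
    have : G.dist w u ≤ G.dist r u - g := hG.connected.dist_ancestor_le u g
    have := hG.connected.dist_triangle (u := r) (v := w) (w := u)
    omega
  have hwv : G.dist w v + g = G.dist r v := by
    have : G.dist w v ≤ G.dist r v - g := by
      rw [show w = G.ancestor r v g from hG.connected.ancestor_meetLevel]
      exact hG.connected.dist_ancestor_le v g
    have := hG.connected.dist_triangle (u := r) (v := w) (w := v)
    omega
  obtain ⟨W, hW⟩ := hG.connected.exists_walk_length_eq_dist u v
  have hmem : w ∈ W.support := hG.ancestor_meetLevel_mem_support W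
  have hlower : G.dist u w + G.dist w v ≤ G.dist u v := by
    rw [← hW, ← W.take_spec hmem, Walk.length_append]
    exact add_le_add (dist_le _) (dist_le _)
  have hupper := hG.connected.dist_triangle (u := u) (v := w) (w := v)
  have : G.dist u w = G.dist w u := dist_comm
  omega

def IsChildLabelling (G : SimpleGraph V) (r c₀ : V) {A : Type*} (lab : V → A) : Prop :=
  ∀ x y, x ≠ r → y ≠ r → x ≠ c₀ → y ≠ c₀ → G.parent r x = G.parent r y → lab x = lab y → x = y

variable {c₀ : V}

theorem IsTree.exists_isChildLabelling (hG : G.IsTree) {n : ℕ} [NeZero n]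
    (hdeg : ∀ v, (G.neighborSet v).encard ≤ n + 1) (hrc : G.Adj r c₀) :
    ∃ lab : V → Fin n, G.IsChildLabelling r c₀ lab := by
  classical
  obtain ⟨lab, hlab⟩ := exists_injOn_fibers (n := n) (G.parent r) {x | x ≠ r ∧ x ≠ c₀} fun p => by
    -- the children of `p` avoid one neighbour of `p`: its parent, or `c₀` at the root
    set e := if p = r then c₀ else G.parent r p
    have he : e ∈ G.neighborSet p := by
      by_cases hp : p = r
      · simpa [e, hp] using hrc
      · simpa [e, hp] using (hG.connected.parent_spec hp).1
    have hsub : {x | x ≠ r ∧ x ≠ c₀} ∩ G.parent r ⁻¹' {p} ⊆ G.neighborSet p \ {e} := by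
      rintro x ⟨⟨hxr, hxc⟩, rfl⟩
      refine ⟨(hG.connected.parent_spec hxr).1.symm, fun hxe => ?_⟩
      by_cases hp : G.parent r x = r
      · simp only [e, hp, if_true, mem_singleton_iff] at hxe
        exact hxc hxe
      · simp only [e, hp, if_false, mem_singleton_iff] at hxe
        have h1 := (hG.connected.parent_spec hxr).2
        have h2 := (hG.connected.parent_spec hp).2
        rw [← hxe] at h2
        omega
    have hcard : (G.neighborSet p \ {e}).encard + 1 ≤ n + 1 :=
      encard_sdiff_singleton_add_one he ▸ hdeg p
    exact (encard_le_encard hsub).trans ((ENat.add_le_add_iff_right ENat.one_ne_top).mp hcard)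
  exact ⟨lab, fun x y hxr hyr hxc hyc hp hl => hlab x ⟨hxr, hxc⟩ y ⟨hyr, hyc⟩ hp hl⟩

/-- Position `p` holds the label of the ancestor at level `p + 1 - s`, so that two vertices at
distance `2 s` whose root paths part at level `g` agree before position `g + s`. -/
noncomputable def labelSeq {A : Type*} (G : SimpleGraph V) (r : V) (lab : V → A) (s : ℕ)
    (v : V) : ℕ → A :=
  fun p => lab (G.ancestor r v (p + 1 - s))

theorem Connected.ancestor_succ_ne (hG : G.Connected) (hrc : G.Adj r c₀) {g : ℕ}
    (hg : g < G.dist r x) (hx : g = 0 → G.dist r x ≤ G.dist c₀ x) :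
    G.ancestor r x (g + 1) ≠ r ∧ G.ancestor r x (g + 1) ≠ c₀ := by
  have hlevel := hG.dist_ancestor (r := r) x (g + 1)
  refine ⟨fun h => by rw [h, dist_self] at hlevel; omega, fun h => ?_⟩
  rw [h, dist_eq_one_iff_adj.mpr hrc] at hlevel
  obtain rfl : g = 0 := by omega
  have := hG.dist_ancestor_le (r := r) x 1
  rw [h] at this
  have := hx rfl
  omega

theorem Connected.dist_lt_two_mul_of_near (hG : G.Connected) (hrc : G.Adj r c₀) {s : ℕ}
    {u v : V} (hu : G.dist r u < s ∨ G.dist c₀ u < s) (hv : G.dist r v < s ∨ G.dist c₀ v < s) :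
    G.dist u v < 2 * s := by
  have key : ∀ x y, G.dist x y ≤ 1 → G.dist x u < s → G.dist y v < s → G.dist u v < 2 * s := by
    intro x y hxy hxu hyv
    have := hG.dist_triangle (u := u) (v := x) (w := v)
    have := hG.dist_triangle (u := x) (v := y) (w := v)
    have : G.dist u x = G.dist x u := dist_comm
    omega
  have hrc' : G.dist r c₀ ≤ 1 := (dist_eq_one_iff_adj.mpr hrc).le
  rcases hu with hu | hu <;> rcases hv with hv | hv
  · exact key r r (by simp) hu hv
  · exact key r c₀ hrc' hu hv
  · exact key c₀ r (dist_comm.trans_le hrc') hu hv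
  · exact key c₀ c₀ (by simp) hu hv

section Coloring

variable {A C : Type*} [Finite A] {lab : V → A} {k s : ℕ}

theorem IsTree.blockColor_labelSeq_ne (hG : G.IsTree) (hrc : G.Adj r c₀)
    (hlab : G.IsChildLabelling r c₀ lab) [Finite C] [Nonempty C] (hk : 0 < k) (hks : k ≤ 2 * s)
    (hC : Nat.card A ^ k + Nat.card A ^ (k / 2) + 2 * s / k ≤ Nat.card C) {u v : V}
    (huv : G.dist u v = 2 * s) (hle : G.dist r u ≤ G.dist r v)
    (hu : s ≤ G.dist r u ∧ s ≤ G.dist c₀ u) (hv : s ≤ G.dist r v ∧ s ≤ G.dist c₀ v) :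
    (blockColor k (2 * s / k) (G.dist r u / k) (G.labelSeq r lab s u) : C) ≠
      blockColor k (2 * s / k) (G.dist r v / k) (G.labelSeq r lab s v) := by
  have hd := hG.dist_add_two_mul_meetLevel r u v
  have hg := meetLevel_le (G := G) (r := r) (u := u) (v := v)
  set g := G.meetLevel r u v
  have hlt := Nat.lt_mul_div_succ (2 * s) hk
  refine blockColor_ne hC hk hle (L := g + s) (by omega) (by omega) (fun p hp => ?_) fun hsame => ?_
  · simp only [labelSeq]
    rw [hG.connected.ancestor_eq_of_le_meetLevel (u := u) (v := v) (by omega)]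
  have hclose : G.dist r v < G.dist r u + k := by
    have := Nat.div_add_mod (G.dist r u) k
    have := Nat.div_add_mod (G.dist r v) k
    have := Nat.mod_lt (G.dist r v) hk
    rw [hsame] at *
    omega
  -- otherwise `u` would be an ancestor of `v`, with `G.dist r v = G.dist r u + 2 * s`
  have hgu : g < G.dist r u := by omega
  have hgv : g < G.dist r v := by omega
  obtain ⟨hur, huc⟩ := hG.connected.ancestor_succ_ne hrc hgu fun _ => by omega
  obtain ⟨hvr, hvc⟩ := hG.connected.ancestor_succ_ne hrc hgv fun _ => by omega
  simp only [labelSeq, show g + s + 1 - s = g + 1 by omega]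
  refine fun hl => ancestor_succ_meetLevel_ne hgu hgv (hlab _ _ hur hvr huc hvc ?_ hl)
  rw [parent_ancestor_succ hgu, parent_ancestor_succ hgv]
  exact hG.connected.ancestor_meetLevel

theorem IsTree.colorable_exactDistGraph (hG : G.IsTree) (hrc : G.Adj r c₀)
    (hlab : G.IsChildLabelling r c₀ lab) [Fintype C] [Nonempty C] (hk : 0 < k) (hks : k ≤ 2 * s)
    (hC : Nat.card A ^ k + Nat.card A ^ (k / 2) + 2 * s / k ≤ Nat.card C) :
    (exactDistGraph G (2 * s)).Colorable (Fintype.card C + 1) := by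
  classical
  let far : V → Prop := fun v => s ≤ G.dist r v ∧ s ≤ G.dist c₀ v
  let color : V → Option C := fun v =>
    if far v then some (blockColor k (2 * s / k) (G.dist r v / k) (G.labelSeq r lab s v)) else none
  suffices h : ∀ u v, G.dist u v = 2 * s → color u ≠ color v by
    simpa using (Coloring.mk (G := exactDistGraph G (2 * s)) color fun huv => h _ _ huv.2).colorable
  intro u v huv
  by_cases hu : far u <;> by_cases hv : far v <;> simp only [color, hu, hv, if_true, if_false]
  · rcases le_total (G.dist r u) (G.dist r v) with h | h
    · exact Option.some_injective _ |>.ne (hG.blockColor_labelSeq_ne hrc hlab hk hks hC huv h hu hv)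
    · exact Option.some_injective _ |>.ne
        (hG.blockColor_labelSeq_ne hrc hlab hk hks hC (dist_comm.trans huv) h hv hu).symm
  · simp
  · simp
  · simp only [far, not_and_or, not_le] at hu hv
    exact absurd huv (hG.connected.dist_lt_two_mul_of_near hrc hu hv).ne

end Coloring

end SimpleGraph

/-- For `q ≥ 3`, even `d`, and `k ≥ 1` with `k(q-1)^(k-1) ≤ d`, we have
`χ(T_q, d) ≤ (q-1)^k + (q-1)^⌊k/2⌋ + d/k + 1` for the infinite `q`-regular
tree `T_q` (here `d/k` is the floor of the rational `d/k`, so this is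
equivalent to the real-valued bound since `χ` is an integer). -/
theorem exactPower_regular_tree_colorable {V : Type*}
    (G : SimpleGraph V) (q d k : ℕ) (hq : 3 ≤ q)
    (htree : G.IsTree) (hreg : ∀ v : V, (G.neighborSet v).ncard = q)
    (hd : Even d) (hk : 1 ≤ k) (hkd : k * (q - 1) ^ (k - 1) ≤ d) :
    (exactDistGraph G d).Colorable ((q - 1) ^ k + (q - 1) ^ (k / 2) + d / k + 1) := by
  obtain ⟨s, rfl⟩ := hd
  rw [← two_mul] at hkd ⊢
  have : NeZero (q - 1) := ⟨by omega⟩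
  obtain ⟨r⟩ := htree.connected.nonempty
  obtain ⟨c₀, hrc⟩ : (G.neighborSet r).Nonempty := nonempty_of_ncard_ne_zero (by rw [hreg]; omega)
  have hdeg : ∀ v, (G.neighborSet v).encard ≤ (q - 1 : ℕ) + 1 := fun v => by
    rw [← (finite_of_ncard_ne_zero (by rw [hreg]; omega)).cast_ncard_eq, hreg]
    exact_mod_cast (by omega)
  obtain ⟨lab, hlab⟩ := htree.exists_isChildLabelling hdeg hrc
  have hpow := pow_pos (show 0 < q - 1 by omega)
  have hks : k ≤ 2 * s := (Nat.le_mul_of_pos_right k (hpow _)).trans hkd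
  have : Nonempty (Fin ((q - 1) ^ k + (q - 1) ^ (k / 2) + 2 * s / k)) :=
    ⟨⟨0, Nat.add_pos_left (Nat.add_pos_left (hpow k) _) _⟩⟩
  simpa using htree.colorable_exactDistGraph hrc hlab
    (C := Fin ((q - 1) ^ k + (q - 1) ^ (k / 2) + 2 * s / k)) hk hks (by simp)
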